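/- Suppose M_d(β) is positive semidefinite, recursively generated, and its column relations are generated entirely by X^n = p(X,Y) and Y^m = q(X,Y) via recursiveness and linearity, and let B(d+1) be the unique block such that (M_d B(d+1)) has moment-matrix block structure (entries of total index degree ≤ 2d equal the corresponding β_{ij}, and the degree-d row block is Hankel) and is recursively generated with column space of B(d+1) contained in that of M_d. Then there exists a unique symmetric Hankel matrix C(d+1) indexed by the monomials of degree d+1 (entries depending only on the sums of the two bi-indices) such that M_{d+1} := [[M_d, B(d+1)], [B(d+1)^T, C(d+1)]] is the moment matrix M_{d+1}(β') of an extension β' of β and is an RG extension of M_d(β). -/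

import Mathlib

open Finset Matrix

noncomputable section

/-- Monomial indices of degree at most `d` (the monomial `x^i y^j` is the pair `(i,j)`). -/
abbrev Idx (d : ℕ) : Type := {ij : ℕ × ℕ // ij.1 + ij.2 ≤ d}

/-- Monomial indices of degree exactly `e`. -/
abbrev Jdx (e : ℕ) : Type := {ij : ℕ × ℕ // ij.1 + ij.2 = e}

instance (d : ℕ) : Fintype (Idx d) :=
  Fintype.subtype
    ((Finset.range (d + 1) ×ˢ Finset.range (d + 1)).filter fun ij => ij.1 + ij.2 ≤ d)
    (by
      rintro ⟨a, b⟩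
      simp only [Finset.mem_filter, Finset.mem_product, Finset.mem_range]
      omega)

instance (e : ℕ) : Fintype (Jdx e) :=
  Fintype.subtype
    ((Finset.range (e + 1) ×ˢ Finset.range (e + 1)).filter fun ij => ij.1 + ij.2 = e)
    (by
      rintro ⟨a, b⟩
      simp only [Finset.mem_filter, Finset.mem_product, Finset.mem_range]
      omega)

/-- The moment matrix `M_d(β)`: rows and columns are indexed by monomials of degree ≤ d,
with entry in row `(i,j)`, column `(k,l)` equal to `β (i+k) (j+l)`. -/
def momentMatrix (d : ℕ) (β : ℕ → ℕ → ℝ) : Matrix (Idx d) (Idx d) ℝ :=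
  Matrix.of fun r c => β (r.1.1 + c.1.1) (r.1.2 + c.1.2)

/-- The coefficient vector (truncated to degree ≤ d) of the polynomial with
coefficient function `a`. -/
def coeffVec (d : ℕ) (a : ℕ → ℕ → ℝ) : Idx d → ℝ := fun c => a c.1.1 c.1.2

/-- `p(X,Y)`: the linear combination of the columns of `M_d(β)` given by the
coefficient function `a` of `p`. -/
def polyCol (d : ℕ) (β : ℕ → ℕ → ℝ) (a : ℕ → ℕ → ℝ) : Idx d → ℝ :=
  momentMatrix d β *ᵥ coeffVec d a

/-- Coefficient function of the monomial `x^u y^v`. -/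
def monoC (u v : ℕ) : ℕ → ℕ → ℝ := fun k l => if k = u ∧ l = v then 1 else 0

/-- Coefficient function of `x^u y^v * p`, where `p` has coefficient function `a`. -/
def shiftC (u v : ℕ) (a : ℕ → ℕ → ℝ) : ℕ → ℕ → ℝ :=
  fun k l => if u ≤ k ∧ v ≤ l then a (k - u) (l - v) else 0

/-- The polynomial with coefficient function `a` has (total) degree at most `D`. -/
def DegLE (a : ℕ → ℕ → ℝ) (D : ℕ) : Prop := ∀ k l : ℕ, D < k + l → a k l = 0

/-- Coefficient function of the product of two polynomials. -/
def cMul (a b : ℕ → ℕ → ℝ) : ℕ → ℕ → ℝ := fun k l =>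
  ∑ i ∈ Finset.range (k + 1), ∑ j ∈ Finset.range (l + 1), a i j * b (k - i) (l - j)

/-- `M_d(β)` is recursively generated: whenever `p, q, pq` all have degree ≤ d and
`p(X,Y) = 0`, also `(pq)(X,Y) = 0`. -/
def RecursivelyGenerated (d : ℕ) (β : ℕ → ℕ → ℝ) : Prop :=
  ∀ a b : ℕ → ℕ → ℝ, DegLE a d → DegLE b d → DegLE (cMul a b) d →
    polyCol d β a = 0 → polyCol d β (cMul a b) = 0

/-- The column relations of `M_d(β)` are generated entirely by `X^n = p(X,Y)` and
`Y^m = q(X,Y)` via recursiveness and linearity. -/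
def GeneratedBy (d n m : ℕ) (β p q : ℕ → ℕ → ℝ) : Prop :=
  1 ≤ n ∧ n ≤ d ∧ 1 ≤ m ∧ m ≤ d ∧
  DegLE p (n - 1) ∧ DegLE q m ∧ q 0 m = 0 ∧
  polyCol d β (monoC n 0 - p) = 0 ∧
  polyCol d β (monoC 0 m - q) = 0 ∧
  ∀ v : Idx d → ℝ,
    momentMatrix d β *ᵥ v = 0 ↔
      v ∈ Submodule.span ℝ
        {w : Idx d → ℝ |
          (∃ i j : ℕ, n + i + j ≤ d ∧ w = coeffVec d (shiftC i j (monoC n 0 - p))) ∨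
          (∃ k l : ℕ, m + k + l ≤ d ∧ w = coeffVec d (shiftC k l (monoC 0 m - q)))}

/-- `β'` (a multisequence of degree `2d+2` extending `β`) gives an RG extension
`M_{d+1}(β')` of `M_d(β)`: the column space of `B(d+1)` is contained in that of `M_d`,
every column relation of `M_d` extends to `M_{d+1}`, and `M_{d+1}` is recursively
generated. -/
def RGExtension (d : ℕ) (β β' : ℕ → ℕ → ℝ) : Prop :=
  (∀ i j : ℕ, i + j ≤ 2 * d → β' i j = β i j) ∧
  (∀ c : Jdx (d + 1), ∃ v : Idx d → ℝ,
      (fun r : Idx d => β' (r.1.1 + c.1.1) (r.1.2 + c.1.2)) = momentMatrix d β *ᵥ v) ∧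
  (∀ a : ℕ → ℕ → ℝ, DegLE a d → polyCol d β a = 0 → polyCol (d + 1) β' a = 0) ∧
  RecursivelyGenerated (d + 1) β'

/-- The `(row (k,l), column (i,j))` entry of the augmented matrix `(M_d  B(d+1))`,
where rows have degree ≤ d and columns degree ≤ d+1 (value 0 outside this range). -/
def augEntry (d : ℕ) (β : ℕ → ℕ → ℝ) (B : Matrix (Idx d) (Jdx (d + 1)) ℝ)
    (k l i j : ℕ) : ℝ :=
  if hr : k + l ≤ d then
    if i + j ≤ d then β (k + i) (l + j)
    else if hc : i + j = d + 1 then B ⟨(k, l), hr⟩ ⟨(i, j), hc⟩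
    else 0
  else 0

/-- The column relation `w(X,Y) = 0` holds among the columns of `(M_d  B(d+1))`. -/
def AugRel (d : ℕ) (β : ℕ → ℕ → ℝ) (B : Matrix (Idx d) (Jdx (d + 1)) ℝ)
    (w : ℕ → ℕ → ℝ) : Prop :=
  ∀ k l : ℕ, k + l ≤ d →
    ∑ c : Idx (d + 1), w c.1.1 c.1.2 * augEntry d β B k l c.1.1 c.1.2 = 0

/-- `(M_d  B(d+1))` is recursively generated for polynomials of degree ≤ d+1. -/
def AugRecGen (d : ℕ) (β : ℕ → ℕ → ℝ) (B : Matrix (Idx d) (Jdx (d + 1)) ℝ) : Prop :=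
  ∀ a b : ℕ → ℕ → ℝ, DegLE a (d + 1) → DegLE b (d + 1) → DegLE (cMul a b) (d + 1) →
    AugRel d β B a → AugRel d β B (cMul a b)


/-!
The relations `X^n = p(X,Y)` and `Y^m = q(X,Y)` determine a moment sequence `relExt` from `β`:
a moment with `i ≥ n` is rewritten by the first relation, one with `i < n` and `j ≥ m` by the
second, until `i < n` and `j < m`, where `β` is used. Any sequence in which both relations hold in
all rows up to degree `N` agrees with `relExt` up to degree `N`.

Recursive generation of `(M_d  B(d+1))` makes the relations hold up to degree `2d + 1` in the
moments given by `β` and `B`, and recursive generation of an RG extension `M_{d+1}(β')` makes them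
hold up to degree `2d + 2` in `β'`. Hence `B` and every such `C(d+1)` are read off from `relExt`,
which gives uniqueness.

Conversely `relExt` satisfies both relations in every row (the second because the two recursions
commute), so all shifts of the two generators, which span the column relations of `M_d(β)`, are
column relations of `M_{d+1}(relExt)`. Recursive generation follows from
`deg (a b) = deg a + deg b`: if `b` is not constant and `deg (a b) ≤ d + 1`, then `a` is a column
relation of `M_d(β)`.
-/

namespace DegLE

variable {f f' : ℕ → ℕ → ℝ} {D D' : ℕ}

lemma mono (hf : DegLE f D) (h : D ≤ D') : DegLE f D' := fun k l hkl => hf k l (by omega)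

lemma le_of_ne_zero (hf : DegLE f D) {k l : ℕ} (h : f k l ≠ 0) : k + l ≤ D :=
  not_lt.1 fun hlt => h (hf k l hlt)

lemma zero : DegLE (0 : ℕ → ℕ → ℝ) D := fun _ _ _ => rfl

lemma add (hf : DegLE f D) (hf' : DegLE f' D) : DegLE (f + f') D := fun k l h => by
  simp [hf k l h, hf' k l h]

lemma sub (hf : DegLE f D) (hf' : DegLE f' D) : DegLE (f - f') D := fun k l h => by
  simp [hf k l h, hf' k l h]

lemma smul (c : ℝ) (hf : DegLE f D) : DegLE (c • f) D := fun k l h => by simp [hf k l h]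

lemma shiftC (hf : DegLE f D) (u v : ℕ) : DegLE (shiftC u v f) (u + v + D) := fun k l h => by
  unfold _root_.shiftC
  split_ifs
  · exact hf _ _ (by omega)
  · rfl

end DegLE

lemma degLE_monoC {u v D : ℕ} (h : u + v ≤ D) : DegLE (monoC u v) D := fun k l hkl => by
  simp only [monoC, ite_eq_right_iff, one_ne_zero, imp_false, not_and]
  omega

section Riesz

/-- `riesz g U V N f` is `L_g(x^U y^V f)`, where `L_g` is the Riesz functional of `g`; the sum
runs over the window `[0, N)²`, which has to contain the support of `f`. -/
def riesz (g : ℕ → ℕ → ℝ) (U V N : ℕ) : (ℕ → ℕ → ℝ) →ₗ[ℝ] ℝ where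
  toFun f := ∑ k ∈ range N, ∑ l ∈ range N, f k l * g (U + k) (V + l)
  map_add' f f' := by simp only [Pi.add_apply, add_mul, sum_add_distrib]
  map_smul' c f := by simp only [Pi.smul_apply, smul_eq_mul, mul_assoc, mul_sum, RingHom.id_apply]

variable {g g' f h : ℕ → ℕ → ℝ} {U V U' V' N D : ℕ}

lemma riesz_apply :
    riesz g U V N f = ∑ k ∈ range N, ∑ l ∈ range N, f k l * g (U + k) (V + l) := rfl

lemma sum_range_sq_eq_of_le {F : ℕ → ℕ → ℝ} {M : ℕ} (hMN : M ≤ N)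
    (hF : ∀ k l, F k l ≠ 0 → k < M ∧ l < M) :
    ∑ k ∈ range N, ∑ l ∈ range N, F k l = ∑ k ∈ range M, ∑ l ∈ range M, F k l := by
  rw [← sum_product', ← sum_product']
  refine (sum_subset (product_subset_product (range_subset_range.2 hMN)
    (range_subset_range.2 hMN)) fun x _ hx => ?_).symm
  by_contra hne
  exact hx (by simpa using hF x.1 x.2 hne)

lemma riesz_window (hf : DegLE f D) (hN : D < N) : riesz g U V N f = riesz g U V (D + 1) f := by
  refine sum_range_sq_eq_of_le hN fun k l hkl => ?_
  have := hf.le_of_ne_zero (left_ne_zero_of_mul hkl)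
  omega

lemma riesz_window_eq {N' : ℕ} (hf : DegLE f D) (hN : D < N) (hN' : D < N') :
    riesz g U V N f = riesz g U V N' f := by
  rw [riesz_window hf hN, riesz_window hf hN']

lemma riesz_congr
    (hg : ∀ a b, a < N → b < N → f a b ≠ 0 → g (U + a) (V + b) = g' (U' + a) (V' + b)) :
    riesz g U V N f = riesz g' U' V' N f := by
  rw [riesz_apply, riesz_apply]
  refine sum_congr rfl fun a ha => sum_congr rfl fun b hb => ?_
  by_cases hf : f a b = 0
  · simp [hf]
  · rw [hg a b (mem_range.1 ha) (mem_range.1 hb) hf]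

lemma riesz_monoC_sub {u v : ℕ} (hu : u < N) (hv : v < N) :
    riesz g U V N (monoC u v - f) = g (U + u) (V + v) - riesz g U V N f := by
  rw [map_sub, riesz_apply, ← sum_product', sum_eq_single (u, v)]
  · simp [monoC]
  · rintro ⟨k, l⟩ - hkl
    simp only [monoC, ite_mul, one_mul, zero_mul, ite_eq_right_iff, and_imp]
    rintro rfl rfl
    exact absurd rfl hkl
  · simp [hu, hv]

lemma riesz_shiftC {u v : ℕ} (hf : DegLE f D) (hN : u + v + D < N) :
    riesz g U V N (shiftC u v f) = riesz g (U + u) (V + v) N f := by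
  simp only [riesz_apply, ← sum_product']
  symm
  refine sum_bij_ne_zero (fun x _ _ => (u + x.1, v + x.2)) ?_ ?_ ?_ ?_
  · rintro ⟨k, l⟩ - hkl
    have := hf.le_of_ne_zero (left_ne_zero_of_mul hkl)
    simp only [mem_product, mem_range]
    omega
  · rintro ⟨k, l⟩ - - ⟨k', l'⟩ - - h
    simp only [Prod.mk.injEq] at h ⊢
    omega
  · rintro ⟨k, l⟩ hkl hne
    simp only [_root_.shiftC, ite_mul, zero_mul, ne_eq, ite_eq_right_iff, not_forall] at hne
    obtain ⟨⟨hk, hl⟩, hne⟩ := hne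
    simp only [mem_product, mem_range] at hkl ⊢
    refine ⟨(k - u, l - v), by omega, ?_, by simp only [Prod.mk.injEq]; omega⟩
    simpa [show U + u + (k - u) = U + k by omega, show V + v + (l - v) = V + l by omega] using hne
  · rintro ⟨k, l⟩ - -
    simp [_root_.shiftC, add_assoc]

lemma riesz_comm {M : ℕ} :
    riesz (fun i j => riesz g i j M h) U V N f = riesz (fun i j => riesz g i j N f) U V M h := by
  simp only [riesz_apply, mul_sum]
  simp_rw [← sum_product' (s := range M) (t := range M),
    ← sum_product' (s := range N) (t := range N)]
  rw [sum_comm]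
  refine sum_congr rfl fun y _ => sum_congr rfl fun x _ => ?_
  rw [add_right_comm U, add_right_comm V]
  ring

end Riesz

section Products

variable {a b f : ℕ → ℕ → ℝ}

lemma cMul_eq_sum_shiftC {E : ℕ} (hb : DegLE b E) :
    cMul f b = ∑ k ∈ range (E + 1), ∑ l ∈ range (E + 1), b k l • shiftC k l f := by
  funext K L
  simp only [cMul, Finset.sum_apply, Pi.smul_apply, smul_eq_mul, ← sum_product']
  refine sum_bij_ne_zero (fun x _ _ => (K - x.1, L - x.2)) ?_ ?_ ?_ ?_
  · rintro ⟨i, j⟩ hij hne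
    have := hb.le_of_ne_zero (right_ne_zero_of_mul hne)
    simp only [mem_product, mem_range] at hij ⊢
    omega
  · rintro ⟨i, j⟩ hij - ⟨i', j'⟩ hij' - h
    simp only [mem_product, mem_range, Prod.mk.injEq] at hij hij' h ⊢
    omega
  · rintro ⟨k, l⟩ - hne
    simp only [shiftC, mul_ite, mul_zero, ne_eq, ite_eq_right_iff, not_forall] at hne
    obtain ⟨⟨hk, hl⟩, hne⟩ := hne
    refine ⟨(K - k, L - l), by simp only [mem_product, mem_range]; omega, ?_, ?_⟩
    · simpa [Nat.sub_sub_self hk, Nat.sub_sub_self hl, mul_comm] using hne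
    · simp only [Prod.mk.injEq]; omega
  · rintro ⟨i, j⟩ hij -
    simp only [mem_product, mem_range] at hij
    simp [shiftC, show i ≤ K by omega, show j ≤ L by omega, Nat.sub_sub_self, mul_comm]

lemma cMul_monoC (u v : ℕ) : cMul f (monoC u v) = shiftC u v f := by
  rw [cMul_eq_sum_shiftC (degLE_monoC le_rfl), ← sum_product', sum_eq_single (u, v)]
  · simp [monoC]
  · rintro ⟨k, l⟩ - hkl
    simp only [monoC, ite_smul, one_smul, zero_smul, ite_eq_right_iff, and_imp]
    rintro rfl rfl
    exact absurd rfl hkl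
  · simp

lemma cMul_of_degLE_zero (hb : DegLE b 0) : cMul f b = b 0 0 • f := by
  rw [cMul_eq_sum_shiftC hb]
  funext k l
  simp [shiftC]

/-- Monomials `x^k y^l`, ordered by degree and then by the power of `x`: a linear order that is
compatible with addition, so that leading monomials multiply. -/
def degLex (x : ℕ × ℕ) : ℕ ×ₗ ℕ := toLex (x.1 + x.2, x.1)

lemma degLex_add (x y : ℕ × ℕ) : degLex (x + y) = degLex x + degLex y := by
  simp only [degLex, ← toLex_add, Prod.mk_add_mk, Prod.fst_add, Prod.snd_add, add_add_add_comm]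

lemma degLex_injective : Function.Injective degLex := fun x y h => by
  simp only [degLex, toLex_inj, Prod.mk.injEq] at h
  ext <;> omega

lemma add_le_add_of_degLex_le {x y : ℕ × ℕ} (h : degLex x ≤ degLex y) :
    x.1 + x.2 ≤ y.1 + y.2 := by
  rcases Prod.Lex.le_iff.1 h with h | h
  · exact h.le
  · exact h.1.le

lemma exists_degLex_max {c : ℕ → ℕ → ℝ} {D i j : ℕ} (hc : DegLE c D)
    (hij : c i j ≠ 0) :
    ∃ x : ℕ × ℕ, c x.1 x.2 ≠ 0 ∧ degLex (i, j) ≤ degLex x ∧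
      ∀ y : ℕ × ℕ, c y.1 y.2 ≠ 0 → degLex y ≤ degLex x := by
  have hmem : ∀ y : ℕ × ℕ, c y.1 y.2 ≠ 0 →
      y ∈ (range (D + 1) ×ˢ range (D + 1)).filter fun y => c y.1 y.2 ≠ 0 := fun y hy => by
    have := hc.le_of_ne_zero hy
    simp only [mem_filter, mem_product, mem_range]
    exact ⟨⟨by omega, by omega⟩, hy⟩
  obtain ⟨x, hx, hmax⟩ := exists_max_image
    ((range (D + 1) ×ˢ range (D + 1)).filter fun y => c y.1 y.2 ≠ 0) degLex
    ⟨(i, j), hmem (i, j) hij⟩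
  exact ⟨x, (mem_filter.1 hx).2, hmax _ (hmem (i, j) hij), fun y hy => hmax y (hmem y hy)⟩

lemma cMul_apply_add_of_degLex_max {x y : ℕ × ℕ}
    (hx : ∀ z : ℕ × ℕ, a z.1 z.2 ≠ 0 → degLex z ≤ degLex x)
    (hy : ∀ z : ℕ × ℕ, b z.1 z.2 ≠ 0 → degLex z ≤ degLex y) :
    cMul a b (x.1 + y.1) (x.2 + y.2) = a x.1 x.2 * b y.1 y.2 := by
  simp only [cMul, ← sum_product']
  rw [sum_eq_single x]
  · simp
  · rintro z hz hzx
    simp only [mem_product, mem_range] at hz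
    by_contra hne
    obtain ⟨hza, hzb⟩ := mul_ne_zero_iff.1 hne
    set w : ℕ × ℕ := (x.1 + y.1 - z.1, x.2 + y.2 - z.2)
    have hzw : z + w = x + y := by ext <;> simp [w] <;> omega
    have hlt : degLex z < degLex x :=
      lt_of_le_of_ne (hx z hza) fun h => hzx (degLex_injective h)
    have := add_lt_add_of_lt_of_le hlt (hy w hzb)
    rw [← degLex_add, ← degLex_add, hzw] at this
    exact lt_irrefl _ this
  · intro hx'
    simp at hx'

lemma exists_cMul_ne_zero {A E k l k' l' : ℕ} (ha : DegLE a A) (hb : DegLE b E)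
    (hakl : a k l ≠ 0) (hbkl : b k' l' ≠ 0) :
    ∃ K L, k + l + (k' + l') ≤ K + L ∧ cMul a b K L ≠ 0 := by
  obtain ⟨x, hx, hxkl, hxmax⟩ := exists_degLex_max ha hakl
  obtain ⟨y, hy, hykl, hymax⟩ := exists_degLex_max hb hbkl
  have := add_le_add_of_degLex_le hxkl
  have := add_le_add_of_degLex_le hykl
  refine ⟨x.1 + y.1, x.2 + y.2, by simp only at *; omega, ?_⟩
  rw [cMul_apply_add_of_degLex_max hxmax hymax]
  exact mul_ne_zero hx hy

lemma degLE_of_degLE_cMul {A E D k l : ℕ} (ha : DegLE a A) (hb : DegLE b E)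
    (hab : DegLE (cMul a b) D) (hbkl : b k l ≠ 0) : DegLE a (D - (k + l)) := by
  intro K L hKL
  by_contra hne
  obtain ⟨K', L', hle, hne'⟩ := exists_cMul_ne_zero ha hb hne hbkl
  exact hne' (hab K' L' (by omega))

end Products

section ColumnRelations

variable {g w : ℕ → ℕ → ℝ} {D : ℕ}

lemma sum_idx_eq_riesz (hw : DegLE w D) (K L : ℕ) :
    ∑ c : Idx D, w c.1.1 c.1.2 * g (K + c.1.1) (L + c.1.2) = riesz g K L (D + 1) w := by
  rw [← sum_subtype ((range (D + 1) ×ˢ range (D + 1)).filter fun x => x.1 + x.2 ≤ D)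
    (fun x => by simp only [mem_filter, mem_product, mem_range]; omega)
    (fun x => w x.1 x.2 * g (K + x.1) (L + x.2)),
    riesz_apply, ← sum_product', sum_subset (filter_subset _ _)]
  intro x _ hx
  simp only [mem_filter, not_and, not_le] at hx
  rw [hw _ _ (hx ‹_›), zero_mul]

lemma polyCol_apply (hw : DegLE w D) {K L : ℕ} (h : K + L ≤ D) :
    polyCol D g w ⟨(K, L), h⟩ = riesz g K L (D + 1) w := by
  rw [← sum_idx_eq_riesz hw]
  simp only [polyCol, momentMatrix, coeffVec, mulVec, dotProduct, of_apply, mul_comm]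

lemma polyCol_smul (c : ℝ) : polyCol D g (c • w) = c • polyCol D g w :=
  mulVec_smul _ c _

lemma polyCol_eq_zero_iff (hw : DegLE w D) :
    polyCol D g w = 0 ↔ ∀ K L, K + L ≤ D → riesz g K L (D + 1) w = 0 := by
  refine ⟨fun h K L hKL => ?_, fun h => funext fun r => ?_⟩
  · rw [← polyCol_apply hw hKL, h, Pi.zero_apply]
  · obtain ⟨⟨K, L⟩, hKL⟩ := r
    rw [polyCol_apply hw hKL, h K L hKL, Pi.zero_apply]

/-- Split `x^U y^V` into a row monomial of degree `≤ R` and a shift `x^u y^v` with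
`u + v + e ≤ C`. -/
lemma riesz_eq_zero_of_shiftC {e R C N : ℕ} (hw : DegLE w e) (he : e ≤ C) (hN : C < N)
    (h : ∀ u v, u + v + e ≤ C → ∀ K L, K + L ≤ R → riesz g K L N (shiftC u v w) = 0)
    {U V : ℕ} (hUV : U + V + e ≤ R + C) : riesz g U V (e + 1) w = 0 := by
  obtain ⟨u, v, huv, hK⟩ :
      ∃ u v, u + v + e ≤ C ∧ u ≤ U ∧ v ≤ V ∧ U - u + (V - v) ≤ R := by
    by_cases hs : U + V + e ≤ C
    · exact ⟨U, V, hs, le_rfl, le_rfl, by omega⟩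
    · exact ⟨min U (C - e), C - e - min U (C - e), by omega, by omega, by omega, by omega⟩
  have := h u v huv (U - u) (V - v) hK.2.2
  rwa [riesz_shiftC hw (by omega), Nat.sub_add_cancel hK.1, Nat.sub_add_cancel hK.2.1,
    riesz_window hw (by omega)] at this

lemma RecursivelyGenerated.polyCol_shiftC {e u v : ℕ} (hrg : RecursivelyGenerated D g)
    (hw : DegLE w e) (huv : u + v + e ≤ D) (hcol : polyCol D g w = 0) :
    polyCol D g (shiftC u v w) = 0 := by
  have := hrg w (monoC u v) (hw.mono (by omega)) (degLE_monoC (by omega))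
    (by rw [cMul_monoC]; exact (hw.shiftC u v).mono huv) hcol
  rwa [cMul_monoC] at this

lemma RecursivelyGenerated.riesz_eq_zero {e : ℕ} (hrg : RecursivelyGenerated D g)
    (hw : DegLE w e) (he : e ≤ D) (hcol : polyCol D g w = 0) {U V : ℕ}
    (hUV : U + V + e ≤ 2 * D) :
    riesz g U V (e + 1) w = 0 :=
  riesz_eq_zero_of_shiftC (R := D) (C := D) hw he (Nat.lt_succ_self D)
    (fun u v huv => (polyCol_eq_zero_iff ((hw.shiftC u v).mono huv)).1
      (hrg.polyCol_shiftC hw huv hcol)) (by omega)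

end ColumnRelations

section RelationSpace

/-- The polynomials of degree `≤ D` that are column relations of the infinite moment matrix
of `g`, i.e. hold in every row. -/
def relationSpace (g : ℕ → ℕ → ℝ) (D : ℕ) : Submodule ℝ (ℕ → ℕ → ℝ) where
  carrier := {f | DegLE f D ∧ ∀ U V, riesz g U V (D + 1) f = 0}
  add_mem' := fun ⟨hf, hf'⟩ ⟨hh, hh'⟩ =>
    ⟨hf.add hh, fun U V => by rw [map_add, hf', hh', add_zero]⟩
  zero_mem' := ⟨DegLE.zero, fun U V => map_zero _⟩
  smul_mem' c _ := fun ⟨hf, hf'⟩ => ⟨hf.smul c, fun U V => by rw [map_smul, hf', smul_zero]⟩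

variable {g f b : ℕ → ℕ → ℝ} {D D' : ℕ}

lemma relationSpace_mono (h : D ≤ D') : relationSpace g D ≤ relationSpace g D' :=
  fun _ ⟨hf, hf'⟩ => ⟨hf.mono h, fun U V => by rw [riesz_window hf (by omega), hf']⟩

lemma shiftC_mem_relationSpace (hf : f ∈ relationSpace g D) (u v : ℕ) :
    shiftC u v f ∈ relationSpace g (u + v + D) := by
  refine ⟨hf.1.shiftC u v, fun U V => ?_⟩
  rw [riesz_shiftC hf.1 (by omega), riesz_window hf.1 (by omega), hf.2]

lemma cMul_mem_relationSpace {E : ℕ} (hf : f ∈ relationSpace g D) (hb : DegLE b E) :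
    cMul f b ∈ relationSpace g (D + E) := by
  rw [cMul_eq_sum_shiftC hb]
  refine Submodule.sum_mem _ fun k _ => Submodule.sum_mem _ fun l _ => ?_
  by_cases hbkl : b k l = 0
  · simp [hbkl]
  · have := hb.le_of_ne_zero hbkl
    exact Submodule.smul_mem _ _
      (relationSpace_mono (by omega) (shiftC_mem_relationSpace hf k l))

lemma polyCol_eq_zero_of_mem_relationSpace (hf : f ∈ relationSpace g D) (hD' : DegLE f D') :
    polyCol D' g f = 0 := by
  refine (polyCol_eq_zero_iff hD').2 fun K L _ => ?_
  have hmin : DegLE f (min D D') := fun k l h =>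
    if hD : D ≤ D' then hf.1 k l (by omega) else hD' k l (by omega)
  rw [riesz_window_eq hmin (N' := D + 1) (by omega) (by omega), hf.2]

def ofCoeffVec (d : ℕ) : (Idx d → ℝ) →ₗ[ℝ] (ℕ → ℕ → ℝ) where
  toFun v k l := if h : k + l ≤ d then v ⟨(k, l), h⟩ else 0
  map_add' v w := by
    funext k l
    by_cases h : k + l ≤ d <;> simp [h]
  map_smul' c v := by
    funext k l
    by_cases h : k + l ≤ d <;> simp [h]

lemma ofCoeffVec_coeffVec {d : ℕ} (hf : DegLE f d) : ofCoeffVec d (coeffVec d f) = f := by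
  funext k l
  by_cases h : k + l ≤ d
  · simp [ofCoeffVec, coeffVec, h]
  · simp [ofCoeffVec, h, hf k l (by omega)]

end RelationSpace

/-- The moment sequence generated from `β` by the relations `X^n = p(X,Y)` (applied when
`i ≥ n`) and `Y^m = q(X,Y)` (applied when `i < n`, `j ≥ m`). Each step lowers `(i + j, j)`
lexicographically; the guards only exclude monomials that `p` and `q` do not contain. -/
def relExt (n m : ℕ) (β p q : ℕ → ℕ → ℝ) (i j : ℕ) : ℝ :=
  if n ≤ i then
    ∑ a ∈ range (n + 1), ∑ b ∈ range (n + 1),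
      if a + b < n then p a b * relExt n m β p q (i - n + a) (j + b) else 0
  else if m ≤ j then
    ∑ a ∈ range (m + 1), ∑ b ∈ range (m + 1),
      if a + b ≤ m ∧ b < m then q a b * relExt n m β p q (i + a) (j - m + b) else 0
  else β i j
termination_by (i + j, j)
decreasing_by all_goals (rw [Prod.lex_def]; omega)

section RelExt

variable {n m : ℕ} {β p q : ℕ → ℕ → ℝ}

lemma DegLE.add_lt_of_ne_zero (hp : DegLE p (n - 1)) (hn : 1 ≤ n) {a b : ℕ} (h : p a b ≠ 0) :
    a + b < n := by
  have := hp.le_of_ne_zero h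
  omega

lemma DegLE.snd_lt_of_ne_zero (hq : DegLE q m) (hq0 : q 0 m = 0) {a b : ℕ} (h : q a b ≠ 0) :
    b < m := by
  have hab := hq.le_of_ne_zero h
  refine lt_of_le_of_ne (by omega) fun hb => h ?_
  obtain rfl : a = 0 := by omega
  rwa [hb]

lemma relExt_of_le (hn : 1 ≤ n) (hp : DegLE p (n - 1)) {i : ℕ} (hi : n ≤ i) (j : ℕ) :
    relExt n m β p q i j = riesz (relExt n m β p q) (i - n) j (n + 1) p := by
  rw [relExt, if_pos hi]
  refine sum_congr rfl fun a _ => sum_congr rfl fun b _ => ?_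
  by_cases hab : p a b = 0
  · simp [hab]
  · rw [if_pos (hp.add_lt_of_ne_zero hn hab)]

lemma relExt_of_lt_of_le (hq : DegLE q m) (hq0 : q 0 m = 0) {i j : ℕ} (hi : i < n)
    (hj : m ≤ j) :
    relExt n m β p q i j = riesz (relExt n m β p q) i (j - m) (m + 1) q := by
  rw [relExt, if_neg (by omega), if_pos hj]
  refine sum_congr rfl fun a _ => sum_congr rfl fun b _ => ?_
  by_cases hab : q a b = 0
  · simp [hab]
  · rw [if_pos ⟨hq.le_of_ne_zero hab, hq.snd_lt_of_ne_zero hq0 hab⟩]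

lemma relExt_of_lt_of_lt {i j : ℕ} (hi : i < n) (hj : j < m) :
    relExt n m β p q i j = β i j := by
  rw [relExt, if_neg (by omega), if_neg (by omega)]

lemma degLE_monoC_sub_x (hn : 1 ≤ n) (hp : DegLE p (n - 1)) : DegLE (monoC n 0 - p) n :=
  (degLE_monoC (by omega)).sub (hp.mono (by omega))

lemma degLE_monoC_sub_y (hq : DegLE q m) : DegLE (monoC 0 m - q) m :=
  (degLE_monoC (by omega)).sub hq

lemma monoC_sub_x_mem_relationSpace (hn : 1 ≤ n) (hp : DegLE p (n - 1)) :
    monoC n 0 - p ∈ relationSpace (relExt n m β p q) n := by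
  refine ⟨degLE_monoC_sub_x hn hp, fun U V => ?_⟩
  rw [riesz_monoC_sub (by omega) (by omega), relExt_of_le hn hp (by omega), add_zero,
    Nat.add_sub_cancel, sub_self]

/-- The second relation holds everywhere because the two recursions commute (`riesz_comm`). -/
lemma monoC_sub_y_mem_relationSpace (hn : 1 ≤ n) (hp : DegLE p (n - 1)) (hq : DegLE q m)
    (hq0 : q 0 m = 0) : monoC 0 m - q ∈ relationSpace (relExt n m β p q) m := by
  refine ⟨degLE_monoC_sub_y hq, fun U V => ?_⟩
  rw [riesz_monoC_sub (by omega) (by omega), add_zero, sub_eq_zero]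
  induction U using Nat.strong_induction_on generalizing V with
  | _ U ih =>
    by_cases hU : n ≤ U
    · calc relExt n m β p q U (V + m)
          = riesz (fun i j => riesz (relExt n m β p q) i j (m + 1) q) (U - n) V (n + 1) p := by
            rw [relExt_of_le hn hp hU]
            refine riesz_congr fun a b _ _ hab => ?_
            have := hp.add_lt_of_ne_zero hn hab
            rw [← ih _ (by omega), add_right_comm]
        _ = riesz (fun i j => riesz (relExt n m β p q) i j (n + 1) p) (U - n) V (m + 1) q :=
            riesz_comm
        _ = riesz (relExt n m β p q) U V (m + 1) q :=
            riesz_congr fun a b _ _ _ => by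
              rw [relExt_of_le hn hp (show n ≤ U + a by omega), Nat.sub_add_comm hU]
    · rw [relExt_of_lt_of_le hq hq0 (by omega) (by omega), Nat.add_sub_cancel]

lemma eq_relExt_of_riesz_eq_zero (hn : 1 ≤ n) (hp : DegLE p (n - 1)) (hq : DegLE q m)
    (hq0 : q 0 m = 0) {g : ℕ → ℕ → ℝ} {N : ℕ}
    (hx : ∀ U V, U + V + n ≤ N → riesz g U V (n + 1) (monoC n 0 - p) = 0)
    (hy : ∀ U V, U + V + m ≤ N → riesz g U V (m + 1) (monoC 0 m - q) = 0)
    (hbase : ∀ i j, i < n → j < m → g i j = β i j) (i j : ℕ) (hij : i + j ≤ N) :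
    g i j = relExt n m β p q i j := by
  by_cases hi : n ≤ i
  · have := hx (i - n) j (by omega)
    rw [riesz_monoC_sub (by omega) (by omega), add_zero, Nat.sub_add_cancel hi, sub_eq_zero] at this
    rw [this, relExt_of_le hn hp hi]
    refine riesz_congr fun a b _ _ hab => ?_
    have := hp.add_lt_of_ne_zero hn hab
    exact eq_relExt_of_riesz_eq_zero hn hp hq hq0 hx hy hbase _ _ (by omega)
  · by_cases hj : m ≤ j
    · have := hy i (j - m) (by omega)
      rw [riesz_monoC_sub (by omega) (by omega), add_zero, Nat.sub_add_cancel hj,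
        sub_eq_zero] at this
      rw [this, relExt_of_lt_of_le hq hq0 (by omega) hj]
      refine riesz_congr fun a b _ _ hab => ?_
      have := hq.le_of_ne_zero hab
      have := hq.snd_lt_of_ne_zero hq0 hab
      exact eq_relExt_of_riesz_eq_zero hn hp hq hq0 hx hy hbase _ _ (by omega)
    · rw [relExt_of_lt_of_lt (by omega) (by omega)]
      exact hbase i j (by omega) (by omega)
termination_by (i + j, j)
decreasing_by all_goals (rw [Prod.lex_def]; omega)

end RelExt

section Block

variable {d : ℕ} {β : ℕ → ℕ → ℝ} {B : Matrix (Idx d) (Jdx (d + 1)) ℝ}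

/-- The moments of degree `≤ 2d + 1` read off from `β` and `B`; in degree `2d + 1` the entry of
`B` in a row of degree `d` is used. -/
def blockMoments (d : ℕ) (β : ℕ → ℕ → ℝ) (B : Matrix (Idx d) (Jdx (d + 1)) ℝ)
    (i j : ℕ) : ℝ :=
  if i + j ≤ 2 * d then β i j
  else if h : i + j = 2 * d + 1 then
    B ⟨(min i d, d - min i d), by omega⟩
      ⟨(i - min i d, j - (d - min i d)), by simp only; omega⟩
  else 0

lemma blockMoments_of_le {i j : ℕ} (h : i + j ≤ 2 * d) : blockMoments d β B i j = β i j :=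
  if_pos h

lemma apply_eq_blockMoments
    (hBold : ∀ (r : Idx d) (c : Jdx (d + 1)), r.1.1 + r.1.2 ≤ d - 1 →
      B r c = β (r.1.1 + c.1.1) (r.1.2 + c.1.2))
    (hBhankel : ∀ (r r' : Idx d) (c c' : Jdx (d + 1)),
      r.1.1 + r.1.2 = d → r'.1.1 + r'.1.2 = d →
      r.1.1 + c.1.1 = r'.1.1 + c'.1.1 → r.1.2 + c.1.2 = r'.1.2 + c'.1.2 →
      B r c = B r' c')
    (r : Idx d) (c : Jdx (d + 1)) :
    B r c = blockMoments d β B (r.1.1 + c.1.1) (r.1.2 + c.1.2) := by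
  have hr := r.2
  have hc := c.2
  by_cases hlow : r.1.1 + r.1.2 < d
  · rw [hBold r c (by omega), blockMoments_of_le (by omega)]
  · rw [blockMoments, if_neg (by omega), dif_pos (by omega)]
    exact hBhankel _ _ _ _ (by omega) (by simp only; omega) (by simp only; omega)
      (by simp only; omega)

lemma augEntry_eq_blockMoments
    (hB : ∀ r c, B r c = blockMoments d β B (r.1.1 + c.1.1) (r.1.2 + c.1.2))
    {K L a b : ℕ} (hKL : K + L ≤ d) (hab : a + b ≤ d + 1) :
    augEntry d β B K L a b = blockMoments d β B (K + a) (L + b) := by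
  rw [augEntry, dif_pos hKL]
  split_ifs with h h'
  · rw [blockMoments_of_le (by omega)]
  · exact hB ⟨(K, L), hKL⟩ ⟨(a, b), h'⟩
  · omega

lemma augRel_iff (hB : ∀ r c, B r c = blockMoments d β B (r.1.1 + c.1.1) (r.1.2 + c.1.2))
    {w : ℕ → ℕ → ℝ} (hw : DegLE w (d + 1)) :
    AugRel d β B w ↔ ∀ K L, K + L ≤ d → riesz (blockMoments d β B) K L (d + 2) w = 0 := by
  refine forall₂_congr fun K L => forall_congr' fun hKL => ?_
  rw [← sum_idx_eq_riesz hw]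
  refine Eq.congr_left (sum_congr rfl fun c _ => ?_)
  rw [augEntry_eq_blockMoments hB hKL c.2]

lemma AugRecGen.riesz_eq_zero (hBrg : AugRecGen d β B)
    (hB : ∀ r c, B r c = blockMoments d β B (r.1.1 + c.1.1) (r.1.2 + c.1.2))
    {w : ℕ → ℕ → ℝ} {e : ℕ} (hw : DegLE w e) (he : e ≤ d) (hcol : polyCol d β w = 0)
    {U V : ℕ} (hUV : U + V + e ≤ 2 * d + 1) :
    riesz (blockMoments d β B) U V (e + 1) w = 0 := by
  have hrel : AugRel d β B w := (augRel_iff hB (hw.mono (by omega))).2 fun K L hKL => by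
    rw [riesz_window_eq hw (N' := d + 1) (by omega) (by omega),
      ← (polyCol_eq_zero_iff (hw.mono he)).1 hcol K L hKL]
    exact riesz_congr fun a b _ _ hab => blockMoments_of_le (by
      have := hw.le_of_ne_zero hab
      omega)
  refine riesz_eq_zero_of_shiftC (R := d) (C := d + 1) hw (by omega) (Nat.lt_succ_self _)
    (fun u v huv K L hKL => ?_) (by omega)
  have := hBrg w (monoC u v) (hw.mono (by omega)) (degLE_monoC (by omega))
    (by rw [cMul_monoC]; exact (hw.shiftC u v).mono huv) hrel
  rw [cMul_monoC] at this
  exact (augRel_iff hB ((hw.shiftC u v).mono huv)).1 this K L hKL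

end Block

section Extension

variable {d n m : ℕ} {β p q : ℕ → ℕ → ℝ}

lemma blockMoments_eq_relExt (hgen : GeneratedBy d n m β p q)
    {B : Matrix (Idx d) (Jdx (d + 1)) ℝ}
    (hB : ∀ r c, B r c = blockMoments d β B (r.1.1 + c.1.1) (r.1.2 + c.1.2))
    (hBrg : AugRecGen d β B) {i j : ℕ} (hij : i + j ≤ 2 * d + 1) :
    blockMoments d β B i j = relExt n m β p q i j := by
  obtain ⟨hn, hnd, -, hmd, hp, hq, hq0, hx, hy, -⟩ := hgen
  exact eq_relExt_of_riesz_eq_zero hn hp hq hq0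
    (fun _ _ hUV => hBrg.riesz_eq_zero hB (degLE_monoC_sub_x hn hp) hnd hx hUV)
    (fun _ _ hUV => hBrg.riesz_eq_zero hB (degLE_monoC_sub_y hq) hmd hy hUV)
    (fun _ _ _ _ => blockMoments_of_le (by omega)) i j hij

lemma RGExtension.eq_relExt (hgen : GeneratedBy d n m β p q) {β' : ℕ → ℕ → ℝ}
    (h : RGExtension d β β') {i j : ℕ} (hij : i + j ≤ 2 * d + 2) :
    β' i j = relExt n m β p q i j := by
  obtain ⟨hn, hnd, -, hmd, hp, hq, hq0, hx, hy, -⟩ := hgen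
  obtain ⟨hlow, -, hext, hrg⟩ := h
  have hx' := hext _ ((degLE_monoC_sub_x hn hp).mono hnd) hx
  have hy' := hext _ ((degLE_monoC_sub_y hq).mono hmd) hy
  exact eq_relExt_of_riesz_eq_zero hn hp hq hq0
    (fun _ _ hUV => hrg.riesz_eq_zero (degLE_monoC_sub_x hn hp) (by omega) hx' (by omega))
    (fun _ _ hUV => hrg.riesz_eq_zero (degLE_monoC_sub_y hq) (by omega) hy' (by omega))
    (fun _ _ _ _ => hlow _ _ (by omega)) i j hij

/-- Every column relation of `M_d(β)` lies in the span of the shifts of the two generators, and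
these are relations of the whole moment matrix of `relExt`. -/
lemma mem_relationSpace_relExt (hgen : GeneratedBy d n m β p q) {a : ℕ → ℕ → ℝ}
    (ha : DegLE a d) (hcol : polyCol d β a = 0) : a ∈ relationSpace (relExt n m β p q) d := by
  obtain ⟨hn, -, -, -, hp, hq, hq0, -, -, hker⟩ := hgen
  rw [← ofCoeffVec_coeffVec ha]
  refine (Submodule.span_le (p := (relationSpace _ d).comap (ofCoeffVec d))).2 ?_ ((hker _).1 hcol)
  rintro w (⟨i, j, hij, rfl⟩ | ⟨i, j, hij, rfl⟩)
  · rw [SetLike.mem_coe, Submodule.mem_comap, ofCoeffVec_coeffVec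
      (((degLE_monoC_sub_x hn hp).shiftC i j).mono (by omega))]
    exact relationSpace_mono (by omega)
      (shiftC_mem_relationSpace (monoC_sub_x_mem_relationSpace hn hp) i j)
  · rw [SetLike.mem_coe, Submodule.mem_comap, ofCoeffVec_coeffVec
      (((degLE_monoC_sub_y hq).shiftC i j).mono (by omega))]
    exact relationSpace_mono (by omega)
      (shiftC_mem_relationSpace (monoC_sub_y_mem_relationSpace hn hp hq hq0) i j)

lemma polyCol_eq_zero_of_polyCol_succ {g a : ℕ → ℕ → ℝ}
    (hlow : ∀ i j, i + j ≤ 2 * d → g i j = β i j) (ha : DegLE a d)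
    (hcol : polyCol (d + 1) g a = 0) : polyCol d β a = 0 := by
  refine (polyCol_eq_zero_iff ha).2 fun K L hKL => ?_
  have := (polyCol_eq_zero_iff (ha.mono (Nat.le_succ d))).1 hcol K L (by omega)
  rw [riesz_window ha (by omega)] at this
  rw [← this]
  exact riesz_congr fun a b _ _ hab => (hlow _ _ (by
    have := ha.le_of_ne_zero hab
    omega)).symm

/-- If `b` is not constant and `deg (a b) ≤ d + 1`, then `deg a ≤ d`, so `a` is a relation of
`M_d(β)` and thus of the whole moment matrix of `relExt`; these are closed under products. -/
lemma recursivelyGenerated_relExt (hgen : GeneratedBy d n m β p q)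
    (hlow : ∀ i j, i + j ≤ 2 * d → relExt n m β p q i j = β i j) :
    RecursivelyGenerated (d + 1) (relExt n m β p q) := by
  intro a b ha hb hab hcol
  by_cases hb0 : DegLE b 0
  · rw [cMul_of_degLE_zero hb0, polyCol_smul, hcol, smul_zero]
  · obtain ⟨k, l, hkl, hbkl⟩ : ∃ k l, 0 < k + l ∧ b k l ≠ 0 := by simpa [DegLE] using hb0
    have ha' : DegLE a d := (degLE_of_degLE_cMul ha hb hab hbkl).mono (by omega)
    have hrel := mem_relationSpace_relExt hgen ha' (polyCol_eq_zero_of_polyCol_succ hlow ha' hcol)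
    exact polyCol_eq_zero_of_mem_relationSpace (cMul_mem_relationSpace hrel hb) hab

lemma rgExtension_relExt (hgen : GeneratedBy d n m β p q)
    (hlow : ∀ i j, i + j ≤ 2 * d → relExt n m β p q i j = β i j)
    (hran : ∀ c : Jdx (d + 1), ∃ v : Idx d → ℝ,
      (fun r : Idx d => relExt n m β p q (r.1.1 + c.1.1) (r.1.2 + c.1.2)) =
        momentMatrix d β *ᵥ v) :
    RGExtension d β (relExt n m β p q) :=
  ⟨hlow, hran, fun _ ha hcol => polyCol_eq_zero_of_mem_relationSpace
    (mem_relationSpace_relExt hgen ha hcol) (ha.mono (Nat.le_succ d)),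
    recursivelyGenerated_relExt hgen hlow⟩

end Extension

theorem statement2_general (d n m : ℕ) (β p q : ℕ → ℕ → ℝ)
    (hgen : GeneratedBy d n m β p q)
    (B : Matrix (Idx d) (Jdx (d + 1)) ℝ)
    (hBold : ∀ (r : Idx d) (c : Jdx (d + 1)), r.1.1 + r.1.2 ≤ d - 1 →
      B r c = β (r.1.1 + c.1.1) (r.1.2 + c.1.2))
    (hBhankel : ∀ (r r' : Idx d) (c c' : Jdx (d + 1)),
      r.1.1 + r.1.2 = d → r'.1.1 + r'.1.2 = d →
      r.1.1 + c.1.1 = r'.1.1 + c'.1.1 → r.1.2 + c.1.2 = r'.1.2 + c'.1.2 →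
      B r c = B r' c')
    (hBrg : AugRecGen d β B)
    (hBran : ∀ c : Jdx (d + 1), ∃ v : Idx d → ℝ,
      (fun r : Idx d => B r c) = momentMatrix d β *ᵥ v) :
    ∃! C : Matrix (Jdx (d + 1)) (Jdx (d + 1)) ℝ,
      (∀ c c' : Jdx (d + 1), C c c' = C c' c) ∧
      (∀ c c' e e' : Jdx (d + 1),
        c.1.1 + c'.1.1 = e.1.1 + e'.1.1 → c.1.2 + c'.1.2 = e.1.2 + e'.1.2 →
        C c c' = C e e') ∧
      ∃ β' : ℕ → ℕ → ℝ,
        (∀ (r : Idx d) (c : Jdx (d + 1)), β' (r.1.1 + c.1.1) (r.1.2 + c.1.2) = B r c) ∧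
        (∀ c c' : Jdx (d + 1), β' (c.1.1 + c'.1.1) (c.1.2 + c'.1.2) = C c c') ∧
        RGExtension d β β' := by
  have hB := apply_eq_blockMoments hBold hBhankel
  have hBext : ∀ r c, relExt n m β p q (r.1.1 + c.1.1) (r.1.2 + c.1.2) = B r c := fun r c => by
    rw [hB, blockMoments_eq_relExt hgen hB hBrg (by have := r.2; have := c.2; omega)]
  have hlow : ∀ i j, i + j ≤ 2 * d → relExt n m β p q i j = β i j := fun i j h => by
    rw [← blockMoments_eq_relExt hgen hB hBrg (by omega), blockMoments_of_le h]
  refine ⟨fun c c' => relExt n m β p q (c.1.1 + c'.1.1) (c.1.2 + c'.1.2),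
    ⟨fun c c' => by simp only [add_comm], fun c c' e e' h₁ h₂ => by simp only [h₁, h₂],
      relExt n m β p q, hBext, fun _ _ => rfl,
      rgExtension_relExt hgen hlow fun c => by simpa only [hBext] using hBran c⟩, ?_⟩
  rintro C ⟨-, -, β', -, hβ'C, hRG⟩
  funext c c'
  rw [← hβ'C, hRG.eq_relExt hgen (by have := c.2; have := c'.2; omega)]

/-- Under the hypotheses of Theorem rdext, given the unique block
`B(d+1)` making `(M_d  B(d+1))` a recursively generated moment-matrix block with column
space contained in that of `M_d`, there is a unique symmetric Hankel block `C(d+1)` such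
that `[[M_d, B],[Bᵀ, C]]` is the moment matrix `M_{d+1}(β')` of an extension `β'` of `β`
and is an RG extension of `M_d(β)`. -/
theorem statement2 (d n m : ℕ) (hd : 1 ≤ d) (β p q : ℕ → ℕ → ℝ)
    (hpsd : (momentMatrix d β).PosSemidef)
    (hrg : RecursivelyGenerated d β)
    (hgen : GeneratedBy d n m β p q)
    (B : Matrix (Idx d) (Jdx (d + 1)) ℝ)
    (hBold : ∀ (r : Idx d) (c : Jdx (d + 1)), r.1.1 + r.1.2 ≤ d - 1 →
      B r c = β (r.1.1 + c.1.1) (r.1.2 + c.1.2))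
    (hBhankel : ∀ (r r' : Idx d) (c c' : Jdx (d + 1)),
      r.1.1 + r.1.2 = d → r'.1.1 + r'.1.2 = d →
      r.1.1 + c.1.1 = r'.1.1 + c'.1.1 → r.1.2 + c.1.2 = r'.1.2 + c'.1.2 →
      B r c = B r' c')
    (hBrg : AugRecGen d β B)
    (hBran : ∀ c : Jdx (d + 1), ∃ v : Idx d → ℝ,
      (fun r : Idx d => B r c) = momentMatrix d β *ᵥ v) :
    ∃! C : Matrix (Jdx (d + 1)) (Jdx (d + 1)) ℝ,
      (∀ c c' : Jdx (d + 1), C c c' = C c' c) ∧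
      (∀ c c' e e' : Jdx (d + 1),
        c.1.1 + c'.1.1 = e.1.1 + e'.1.1 → c.1.2 + c'.1.2 = e.1.2 + e'.1.2 →
        C c c' = C e e') ∧
      ∃ β' : ℕ → ℕ → ℝ,
        (∀ (r : Idx d) (c : Jdx (d + 1)), β' (r.1.1 + c.1.1) (r.1.2 + c.1.2) = B r c) ∧
        (∀ c c' : Jdx (d + 1), β' (c.1.1 + c'.1.1) (c.1.2 + c'.1.2) = C c c') ∧
        RGExtension d β β' :=
  statement2_general d n m β p q hgen B hBold hBhankel hBrg hBran
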